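/- Let S be a finite nonabelian simple group such that Out(S) is metacyclic (i.e., has a cyclic normal subgroup with cyclic quotient generated by a single coset, so Out(S) = ⟨x,y⟩ with ⟨x⟩ normal). Then a group G with Inn(S) ≤ G ≤ Aut(S) is integrable within Aut(S) if and only if G ≤ Aut(S)'. -/

import Mathlib

/-!
Write `Q = Aut(S)/Inn(S) = ⟨x, y⟩` with `⟨x⟩` normal. Conjugation by `y` acts on the cyclic
normal subgroup `⟨x⟩` as a power map, so `[x ^ n, y] = [x, y] ^ n`, and `Q' = ⟨[x, y]⟩`.
Hence every subgroup `⟨[x, y] ^ n⟩` of `Q'` is the derived subgroup of `⟨x ^ n, y⟩`.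
Since `Inn(S) ≅ S` is perfect, such a subgroup `H̄` lifts: if `G/Inn(S) = H̄'` with
`Inn(S) ≤ G`, then `G = H'` for the preimage `H` of `H̄`.
-/

instance innRange_normal' {S : Type*} [Group S] :
    ((MulAut.conj : S →* MulAut S).range).Normal := by
  constructor
  rintro _ ⟨x, rfl⟩ g
  refine ⟨g x, ?_⟩
  ext s
  simp [mul_assoc]

open scoped commutatorElement

section

open Subgroup

variable {G : Type*} [Group G]

def Subgroup.IsIntegrable (K : Subgroup G) : Prop :=
  ∃ H : Subgroup G, ⁅H, H⁆ = K

theorem Subgroup.Normal.zpowers_pow {x : G} (hx : (zpowers x).Normal) (n : ℕ) :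
    (zpowers (x ^ n)).Normal := by
  refine ⟨fun a ha g => ?_⟩
  obtain ⟨k, rfl⟩ := mem_zpowers_iff.mp ha
  obtain ⟨r, hr⟩ := mem_zpowers_iff.mp (hx.conj_mem x (mem_zpowers x) g)
  have hxr : (x ^ r) ^ n = (x ^ n) ^ r := by
    rw [← zpow_natCast, ← zpow_mul, mul_comm, zpow_mul, zpow_natCast]
  rw [← conj_zpow, ← conj_pow, ← hr, hxr]
  exact zpow_mem (zpow_mem (mem_zpowers _) r) k

theorem commutatorElement_mem_zpowers_left {x : G} (hx : (zpowers x).Normal) (y : G) :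
    ⁅x, y⁆ ∈ zpowers x := by
  have h : ⁅x, y⁆ = x * (y * x⁻¹ * y⁻¹) := by group
  exact h ▸ mul_mem (mem_zpowers x) (hx.conj_mem _ (inv_mem (mem_zpowers x)) y)

theorem commutatorElement_pow_left_of_normal {x : G} (hx : (zpowers x).Normal) (y : G)
    (n : ℕ) : ⁅x ^ n, y⁆ = ⁅x, y⁆ ^ n := by
  have hc : y * x⁻¹ * y⁻¹ ∈ zpowers x := hx.conj_mem _ (inv_mem (mem_zpowers x)) y
  obtain ⟨r, hr⟩ := mem_zpowers_iff.mp hc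
  have hcomm : Commute x (y * x⁻¹ * y⁻¹) := hr ▸ Commute.self_zpow x r
  calc ⁅x ^ n, y⁆ = x ^ n * (y * x⁻¹ * y⁻¹) ^ n := by
        rw [commutatorElement_def, conj_pow, inv_pow, mul_assoc, mul_assoc, mul_assoc]
    _ = ⁅x, y⁆ ^ n := by
        rw [← hcomm.mul_pow, commutatorElement_def, mul_assoc, mul_assoc, mul_assoc]

theorem commutator_closure_pair_le {N : Subgroup G} [N.Normal] {u v : G} (h : ⁅u, v⁆ ∈ N) :
    ⁅closure {u, v}, closure {u, v}⁆ ≤ N := by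
  have huv : QuotientGroup.mk' N u * QuotientGroup.mk' N v =
      QuotientGroup.mk' N v * QuotientGroup.mk' N u := by
    rwa [← commutatorElement_eq_one_iff_mul_comm, ← map_commutatorElement, ← MonoidHom.mem_ker,
      QuotientGroup.ker_mk']
  rw [← QuotientGroup.ker_mk' N, ← Subgroup.map_eq_bot_iff, map_commutator, MonoidHom.map_closure,
    Set.image_pair, commutator_eq_bot_iff_le_centralizer, centralizer_closure, closure_le]
  rintro a (rfl | rfl) <;> rintro b (rfl | rfl)
  exacts [rfl, huv.symm, huv, rfl]

theorem commutator_closure_pair_eq_zpowers {x : G} (hx : (zpowers x).Normal) (y : G) :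
    ⁅closure {x, y}, closure {x, y}⁆ = zpowers ⁅x, y⁆ := by
  refine le_antisymm ?_ (zpowers_le.mpr ?_)
  · obtain ⟨n, hn⟩ := (le_zpowers_iff x (zpowers ⁅x, y⁆)).mp
      (zpowers_le.mpr (commutatorElement_mem_zpowers_left hx y))
    have : (zpowers ⁅x, y⁆).Normal := hn ▸ hx.zpowers_pow n
    exact commutator_closure_pair_le (mem_zpowers _)
  · exact commutator_mem_commutator (subset_closure (Set.mem_insert x _))
      (subset_closure (Set.mem_insert_of_mem x rfl))

theorem isIntegrable_of_le_commutator {x y : G} (hxy : closure {x, y} = ⊤)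
    (hx : (zpowers x).Normal) {K : Subgroup G} (hK : K ≤ commutator G) : K.IsIntegrable := by
  rw [commutator_def, ← hxy, commutator_closure_pair_eq_zpowers hx] at hK
  obtain ⟨n, rfl⟩ := (le_zpowers_iff _ K).mp hK
  exact ⟨closure {x ^ n, y}, by
    rw [commutator_closure_pair_eq_zpowers (hx.zpowers_pow n),
      commutatorElement_pow_left_of_normal hx]⟩

theorem Subgroup.IsIntegrable.of_map_mk' {N K : Subgroup G} [N.Normal] (hN : ⁅N, N⁆ = N)
    (hNK : N ≤ K) (hK : (K.map (QuotientGroup.mk' N)).IsIntegrable) : K.IsIntegrable := by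
  obtain ⟨H, hH⟩ := hK
  have hker : (QuotientGroup.mk' N).ker = N := QuotientGroup.ker_mk' N
  have hNH : N ≤ H.comap (QuotientGroup.mk' N) := hker.ge.trans (ker_le_comap _ H)
  refine ⟨H.comap (QuotientGroup.mk' N), map_injective_of_ker_le _ ?_ (hker.le.trans hNK) ?_⟩
  · exact hker.le.trans (hN.ge.trans (commutator_mono hNH hNH))
  · rw [map_commutator, map_comap_eq_self_of_surjective (QuotientGroup.mk'_surjective N), hH]

theorem commutator_eq_top_of_isSimpleGroup [IsSimpleGroup G] (h : ¬ ∀ a b : G, a * b = b * a) :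
    commutator G = ⊤ := by
  refine (commutator_normal ⊤ ⊤).eq_bot_or_eq_top.resolve_left fun hbot => h ?_
  exact ((commutator_eq_bot_iff G).mp hbot).is_comm.comm

theorem MonoidHom.commutator_range_eq_self {H : Type*} [Group H] (f : G →* H)
    (hG : commutator G = ⊤) : ⁅f.range, f.range⁆ = f.range := by
  rw [← map_commutator_eq, hG, ← MonoidHom.range_eq_map]

end

theorem stmt9_general {S : Type*} [Group S] [IsSimpleGroup S]
    (hna : ¬ ∀ a b : S, a * b = b * a)
    (hmeta : ∃ x y : MulAut S ⧸ (MulAut.conj : S →* MulAut S).range,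
      Subgroup.closure {x, y} = ⊤ ∧ (Subgroup.zpowers x).Normal)
    (G : Subgroup (MulAut S))
    (hG : (MulAut.conj : S →* MulAut S).range ≤ G) :
    (∃ H : Subgroup (MulAut S), ⁅H, H⁆ = G) ↔ G ≤ commutator (MulAut S) := by
  refine ⟨fun ⟨H, hH⟩ => hH ▸ Subgroup.commutator_mono le_top le_top, fun hGle => ?_⟩
  obtain ⟨x, y, hxy, hx⟩ := hmeta
  have hπ : (commutator (MulAut S)).map (QuotientGroup.mk' (MulAut.conj : S →* MulAut S).range) =
      commutator _ := by
    rw [map_commutator_eq, (MonoidHom.range_eq_top).mpr (QuotientGroup.mk'_surjective _),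
      commutator_def]
  refine Subgroup.IsIntegrable.of_map_mk'
    (MulAut.conj.commutator_range_eq_self (commutator_eq_top_of_isSimpleGroup hna)) hG ?_
  exact isIntegrable_of_le_commutator hxy hx (hπ ▸ Subgroup.map_mono hGle)

/-- If `S` is a finite nonabelian simple group with `Out(S)` metacyclic, then a group
`G` with `Inn(S) ≤ G ≤ Aut(S)` is integrable within `Aut(S)` iff `G ≤ Aut(S)'`. -/
theorem stmt9 {S : Type*} [Group S] [Finite S] [IsSimpleGroup S]
    (hna : ¬ ∀ a b : S, a * b = b * a)
    (hmeta : ∃ x y : MulAut S ⧸ (MulAut.conj : S →* MulAut S).range,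
      Subgroup.closure {x, y} = ⊤ ∧ (Subgroup.zpowers x).Normal)
    (G : Subgroup (MulAut S))
    (hG : (MulAut.conj : S →* MulAut S).range ≤ G) :
    (∃ H : Subgroup (MulAut S), ⁅H, H⁆ = G) ↔ G ≤ commutator (MulAut S) :=
  stmt9_general hna hmeta G hG
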